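/- Let f : ℝ → ℝ be strictly decreasing, strictly convex, and C², with a (necessarily unique) root d. Then for every initial point x ∈ ℝ, the Newton iterates N_f^n(x) converge to d. -/

import Mathlib

/-!
By convexity the graph of `f` lies above each tangent line, so one Newton step from any point
lands at or to the left of the root `d`; from a point left of `d` (where `f ≥ 0 > f'`) a Newton
step moves to the right. Hence after the first step the iterates increase and stay bounded by
`d`, so they converge; the limit is a fixed point of the continuous Newton map, i.e. a root of
`f`, i.e. `d`.
-/

open Set Filter Topology

theorem ConvexOn.add_deriv_mul_sub_le {S : Set ℝ} {f : ℝ → ℝ} {x y : ℝ} (hfc : ConvexOn ℝ S f)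
    (hx : x ∈ S) (hy : y ∈ S) (hfd : DifferentiableAt ℝ f x) :
    f x + deriv f x * (y - x) ≤ f y := by
  rcases lt_trichotomy x y with hxy | rfl | hyx
  · have h := hfc.deriv_le_slope hx hy hxy hfd
    rw [slope_def_field, le_div_iff₀ (sub_pos.2 hxy)] at h
    linarith
  · simp
  · have h := hfc.slope_le_deriv hy hx hyx hfd
    rw [slope_def_field, div_le_iff₀ (sub_pos.2 hyx)] at h
    linarith

theorem ConvexOn.deriv_neg_of_strictAnti {f : ℝ → ℝ} {x : ℝ} (hfc : ConvexOn ℝ univ f)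
    (hanti : StrictAnti f) (hfd : DifferentiableAt ℝ f x) : deriv f x < 0 :=
  calc deriv f x ≤ slope f x (x + 1) :=
        hfc.deriv_le_slope (mem_univ _) (mem_univ _) (lt_add_one x) hfd
    _ < 0 := by
        rw [slope_def_field, add_sub_cancel_left, div_one, sub_neg]
        exact hanti (lt_add_one x)

theorem tendsto_iterate_of_mapsTo_Iic {α : Type*} [ConditionallyCompleteLinearOrder α]
    [TopologicalSpace α] [OrderTopology α] {g : α → α} {d x : α} (hx : x ≤ d)
    (hmaps : MapsTo g (Iic d) (Iic d)) (hle : ∀ t ≤ d, t ≤ g t) (hg : Continuous g)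
    (hfix : ∀ t ≤ d, g t = t → t = d) :
    Tendsto (fun n => g^[n] x) atTop (𝓝 d) := by
  have hbound : ∀ n, g^[n] x ≤ d := fun n => hmaps.iterate n hx
  have hmono : Monotone fun n => g^[n] x := monotone_nat_of_le_succ fun n => by
    rw [Function.iterate_succ_apply']
    exact hle _ (hbound n)
  have hlim := tendsto_atTop_ciSup hmono ⟨d, forall_mem_range.2 hbound⟩
  have hL : (⨆ n, g^[n] x) = d :=
    hfix _ (ciSup_le hbound) (isFixedPt_of_tendsto_iterate hlim hg.continuousAt)
  rwa [hL] at hlim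

noncomputable def newtonMap (f : ℝ → ℝ) (t : ℝ) : ℝ := t - f t / deriv f t

section newtonMap

variable {f : ℝ → ℝ} {d t : ℝ}

theorem newtonMap_eq_self_iff (h : deriv f t ≠ 0) : newtonMap f t = t ↔ f t = 0 := by
  rw [newtonMap, sub_eq_self, div_eq_zero_iff, or_iff_left h]

theorem continuous_newtonMap (hfd : Differentiable ℝ f) (hcont : Continuous (deriv f))
    (hne : ∀ t, deriv f t ≠ 0) : Continuous (newtonMap f) :=
  continuous_id.sub (hfd.continuous.div hcont hne)

/-- The tangent line at `t` vanishes at `newtonMap f t` and lies below the graph of `f`. -/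
theorem newtonMap_le_root (hfc : ConvexOn ℝ univ f) (hanti : StrictAnti f)
    (hfd : DifferentiableAt ℝ f t) (hne : deriv f t ≠ 0) (hd : f d = 0) :
    newtonMap f t ≤ d := by
  have htangent := hfc.add_deriv_mul_sub_le (mem_univ t) (mem_univ (newtonMap f t)) hfd
  have hzero : f t + deriv f t * (newtonMap f t - t) = 0 := by
    rw [newtonMap]
    field_simp
    ring
  rw [← hanti.le_iff_ge, hd]
  linarith

theorem le_newtonMap_of_le_root (hanti : Antitone f) (hd : f d = 0) (hneg : deriv f t < 0)
    (ht : t ≤ d) : t ≤ newtonMap f t := by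
  have hft : 0 ≤ f t := hd ▸ hanti ht
  rw [newtonMap, le_sub_self_iff]
  exact div_nonpos_of_nonneg_of_nonpos hft hneg.le

end newtonMap

/-- For strictly decreasing strictly convex `C²` functions Newton's method
converges globally to the unique root. -/
theorem newton_global_convergence
    (f : ℝ → ℝ) (hf : ContDiff ℝ 2 f)
    (hanti : StrictAnti f) (hconv : StrictConvexOn ℝ Set.univ f)
    (d : ℝ) (hd : f d = 0) :
    ∀ x : ℝ, Filter.Tendsto (fun n => (fun t => t - f t / deriv f t)^[n] x)
      Filter.atTop (nhds d) := by
  intro x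
  have hfd : Differentiable ℝ f := hf.differentiable two_ne_zero
  have hneg : ∀ t, deriv f t < 0 := fun t => hconv.convexOn.deriv_neg_of_strictAnti hanti (hfd t)
  have hle_root : ∀ t, newtonMap f t ≤ d := fun t =>
    newtonMap_le_root hconv.convexOn hanti (hfd t) (hneg t).ne hd
  have hcont : Continuous (newtonMap f) :=
    continuous_newtonMap hfd (hf.continuous_deriv one_le_two) fun t => (hneg t).ne
  have hshift : Tendsto (fun n => (newtonMap f)^[n] (newtonMap f x)) atTop (𝓝 d) :=
    tendsto_iterate_of_mapsTo_Iic (hle_root x) (fun t _ => hle_root t)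
      (fun t ht => le_newtonMap_of_le_root hanti.antitone hd (hneg t) ht) hcont
      fun t _ hfix => hanti.injective <| by rw [(newtonMap_eq_self_iff (hneg t).ne).1 hfix, hd]
  change Tendsto (fun n => (newtonMap f)^[n] x) atTop (𝓝 d)
  refine (tendsto_add_atTop_iff_nat 1).1 ?_
  simpa only [Function.iterate_succ_apply] using hshift
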